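/- Let (R,m) be a 2-dimensional quasi-unmixed Noetherian local ring, v an m-valuation of R, and for each positive integer i let c(v)_i = {a ∈ R : v(a) ≥ i}. Then there exists a positive real λ such that ℓ(R/c(v)_i) ≥ λ·i² for all positive integers i. -/

import Mathlib

/-- The composition length of an `R`-module `M`, as a real number
(the Krull dimension of its submodule lattice; junk value `0` if infinite). -/
noncomputable def rlen (R : Type*) [Ring R] (M : Type*) [AddCommGroup M] [Module R M] : ℝ :=
  (((Order.krullDim (Submodule R M)).unbotD 0).toNat : ℝ)

open Filter in
/-- The Hilbert–Samuel multiplicity of an ideal `I` in a `d`-dimensional ring: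
`d! · lim_n ℓ(R/Iⁿ)/n^d`. -/
noncomputable def hsMult {R : Type*} [CommRing R] (d : ℕ) (I : Ideal R) : ℝ :=
  (d.factorial : ℝ) * limUnder atTop (fun n : ℕ => rlen R (R ⧸ I ^ n) / (n : ℝ) ^ d)

/-- `R` is quasi-unmixed: every minimal prime `P` of the `m`-adic completion
satisfies `dim (R̂/P) = dim R`. -/
def IsQuasiUnmixed (R : Type*) [CommRing R] [IsLocalRing R] : Prop :=
  ∀ P ∈ minimalPrimes (AdicCompletion (IsLocalRing.maximalIdeal R) R),
    ringKrullDim (AdicCompletion (IsLocalRing.maximalIdeal R) R ⧸ P) = ringKrullDim R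

/-!
Pick `x₁, x₂ ∈ R` with `v(x₁) = n > 0` and `x₂ = u x₁` in `V`, where the residue `t` of the unit
`u` is transcendental over the residue field `k` of `R`. For each `r`, the `r + 1` monomials
`x₁^(r-j) x₂^j` lie in `c(v)_{nr}`, and none of them lies in `c(v)_{nr+1}` plus the ideal spanned
by the previous ones: such a relation, divided by `x₁^r` and reduced modulo `m_V`, would make `t`
a root of a monic polynomial over `k`. Hence there is a strict chain of `r + 1` ideals from
`c(v)_{nr+1}` to `c(v)_{nr}`, and concatenating these chains for `r ≤ q` gives
`ℓ(R/c(v)_{nq+1}) ≥ (q+1)(q+2)/2`, which is at least `i²/(2n²)` when `nq < i ≤ n(q+1)`.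
-/

open IsLocalRing IsDiscreteValuationRing Finset

theorem Order.coheight_add_le_of_lt_succ {α : Type*} [Preorder α] (g : ℕ → α) :
    ∀ k : ℕ, (∀ j < k, g j < g (j + 1)) → coheight (g k) + k ≤ coheight (g 0)
  | 0, _ => by simp
  | k + 1, hg => calc
      coheight (g (k + 1)) + (k + 1 : ℕ) = coheight (g (k + 1)) + 1 + k := by push_cast; ring
      _ ≤ coheight (g k) + k := by gcongr; exact coheight_add_one_le (hg k k.lt_succ_self)
      _ ≤ coheight (g 0) := coheight_add_le_of_lt_succ g k fun j hj => hg j (by omega)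

theorem rlen_eq_toNat_length (R M : Type*) [Ring R] [AddCommGroup M] [Module R M] :
    rlen R M = (Module.length R M).toNat := by
  simp [rlen, ← Module.coe_length]

theorem IsLocalRing.length_quotient_ne_top {R : Type*} [CommRing R] [IsNoetherianRing R]
    [IsLocalRing R] {I : Ideal R} {i : ℕ} (hI : I ≠ ⊤) (hmI : maximalIdeal R ^ i ≤ I) :
    Module.length R (R ⧸ I) ≠ ⊤ := by
  have hmin : maximalIdeal R ∈ I.minimalPrimes :=
    ⟨⟨inferInstance, le_maximalIdeal hI⟩, fun q hq _ =>
      have := hq.1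
      Ideal.IsPrime.le_of_pow_le (hmI.trans hq.2)⟩
  have := quotient_artinian_of_mem_minimalPrimes_of_isLocalRing I hmin
  have : IsArtinian R (R ⧸ I) :=
    isArtinian_of_surjective_algebraMap (Ideal.Quotient.mk_surjective (I := I))
  exact Module.length_ne_top

theorem sq_le_two_mul_sum_range_succ (m : ℕ) : m ^ 2 ≤ 2 * ∑ r ∈ range m, (r + 1) := by
  induction m with
  | zero => simp
  | succ m ih => rw [sum_range_succ]; nlinarith

theorem Transcendental.pow_ne_sum {K L : Type*} [CommRing K] [Nontrivial K] [CommRing L]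
    [Algebra K L] {t : L} (ht : Transcendental K t) {s : ℕ} (c : Fin s → K) :
    t ^ s ≠ ∑ j, algebraMap K L (c j) * t ^ (j : ℕ) := by
  intro h
  have hmonic : (Polynomial.X ^ s - ∑ j, Polynomial.C (c j) * Polynomial.X ^ (j : ℕ)).Monic :=
    Polynomial.monic_X_pow_sub (Polynomial.degree_sum_fin_lt c)
  refine ht ⟨_, hmonic.ne_zero, ?_⟩
  simp [h]

theorem pow_sub_sum_notMem_maximalIdeal {R V : Type*} [CommRing R] [IsLocalRing R] [CommRing V]
    [IsLocalRing V] {f : R →+* V} [IsLocalHom f] [Algebra (ResidueField R) (ResidueField V)]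
    (halg : algebraMap (ResidueField R) (ResidueField V) = ResidueField.map f) {u : V}
    (ht : Transcendental (ResidueField R) (residue V u)) {s : ℕ} (a : Fin s → R) :
    u ^ s - ∑ j, f (a j) * u ^ (j : ℕ) ∉ maximalIdeal V := by
  intro h
  rw [← residue_eq_zero_iff, map_sub, sub_eq_zero, map_sum] at h
  refine ht.pow_ne_sum (fun j => residue R (a j)) ?_
  simp [← map_pow, h, halg, ResidueField.map_residue]

theorem exists_map_eq_mul_map_of_isFractionRing {R S K : Type*} [CommRing R] [CommRing S]
    [Nontrivial S] [CommRing K] [Algebra S K] [IsFractionRing S K] {g : R →+* S}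
    (hg : Function.Surjective g) {V : Subring K} {f : R →+* V}
    (hf : ∀ x, (f x : K) = algebraMap S K (g x)) (v : V) :
    ∃ a b : R, f b ≠ 0 ∧ f a = v * f b := by
  obtain ⟨⟨a', b'⟩, hab'⟩ := IsLocalization.surj (nonZeroDivisors S) (v : K)
  obtain ⟨a, rfl⟩ := hg a'
  obtain ⟨b, hb⟩ := hg b'
  refine ⟨a, b, fun h0 => ?_, Subtype.ext ?_⟩
  · have := IsFractionRing.to_map_ne_zero_of_mem_nonZeroDivisors (K := K) b'.2
    rw [← hb, ← hf, h0] at this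
    exact this rfl
  · simp only [Subring.coe_mul, hf, hb]
    exact hab'.symm

theorem map_monomial {R V : Type*} [CommRing R] [CommRing V] {f : R →+* V} {x₁ x₂ : R} {u : V}
    (hx₂ : f x₂ = u * f x₁) {r j : ℕ} (hj : j ≤ r) :
    f (x₁ ^ (r - j) * x₂ ^ j) = f x₁ ^ r * u ^ j := by
  rw [map_mul, map_pow, map_pow, hx₂, mul_pow, ← Nat.sub_add_cancel hj, pow_add,
    Nat.add_sub_cancel]
  ring

namespace IsDiscreteValuationRing

variable {V : Type*} [CommRing V] [IsDomain V] [IsDiscreteValuationRing V]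

theorem mem_maximalIdeal_pow_iff {x : V} {N : ℕ} :
    x ∈ IsLocalRing.maximalIdeal V ^ N ↔ (N : ℕ∞) ≤ addVal V x := by
  obtain ⟨π, hπ⟩ := exists_irreducible V
  rw [hπ.maximalIdeal_eq, Ideal.span_singleton_pow, Ideal.mem_span_singleton,
    ← addVal_le_iff_dvd, hπ.addVal_pow]

theorem mem_maximalIdeal_iff_addVal_pos {x : V} :
    x ∈ IsLocalRing.maximalIdeal V ↔ 0 < addVal V x := by
  simpa [Order.one_le_iff_pos] using mem_maximalIdeal_pow_iff (x := x) (N := 1)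

end IsDiscreteValuationRing

theorem exists_addVal_eq_pos_and_map_eq_mul {R S K : Type*} [CommRing R] [CommRing S]
    [Nontrivial S] [CommRing K] [IsDomain K] [Algebra S K] [IsFractionRing S K] {g : R →+* S}
    (hg : Function.Surjective g) {V : Subring K} [IsDiscreteValuationRing V] {f : R →+* V}
    (hf : ∀ x, (f x : K) = algebraMap S K (g x)) (u : V) :
    ∃ x₁ x₂ : R, ∃ n : ℕ, 0 < n ∧ addVal V (f x₁) = n ∧ f x₂ = u * f x₁ := by
  obtain ⟨π, hπ⟩ := exists_irreducible V
  obtain ⟨a, b, hb, hab⟩ := exists_map_eq_mul_map_of_isFractionRing hg hf u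
  -- the factor `a'` (a numerator of the uniformizer) makes the valuation of `x₁` positive
  obtain ⟨a', b', hb', hab'⟩ := exists_map_eq_mul_map_of_isFractionRing hg hf π
  have hx₁ : f (b * a') = π * (f b * f b') := by rw [map_mul, hab']; ring
  have hx₁_ne_top : addVal V (f (b * a')) ≠ ⊤ := by
    simp [addVal_eq_top_iff, hx₁, hπ.ne_zero, hb, hb']
  have hx₁_pos : 0 < addVal V (f (b * a')) := by
    rw [← mem_maximalIdeal_iff_addVal_pos, hx₁]
    exact Ideal.mul_mem_right _ _ ((mem_maximalIdeal _).mpr hπ.not_isUnit)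
  refine ⟨b * a', a * a', _, ENat.toNat_pos hx₁_pos.ne' hx₁_ne_top,
    (ENat.natCast_toNat hx₁_ne_top).symm, ?_⟩
  rw [map_mul, map_mul, hab]
  ring

section ValuationIdeal

variable {R V : Type*} [CommRing R] [CommRing V] [IsDomain V] [IsDiscreteValuationRing V]

/-- The ideal `c(v)_N = {a ∈ R : v(a) ≥ N}` of the valuation `v = addVal V ∘ f`. -/
def valuationIdeal (f : R →+* V) (N : ℕ) : Ideal R :=
  (IsLocalRing.maximalIdeal V ^ N).comap f

variable {f : R →+* V}

theorem mem_valuationIdeal {N : ℕ} {x : R} :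
    x ∈ valuationIdeal f N ↔ (N : ℕ∞) ≤ addVal V (f x) :=
  mem_maximalIdeal_pow_iff

variable (f) in
theorem valuationIdeal_antitone : Antitone (valuationIdeal f) :=
  fun _ _ h => Ideal.comap_mono (Ideal.pow_le_pow_right h)

variable (f) in
theorem valuationIdeal_ne_top {N : ℕ} (hN : 0 < N) : valuationIdeal f N ≠ ⊤ := by
  rw [Ne, Ideal.eq_top_iff_one, mem_valuationIdeal, map_one, addVal_one]
  exact_mod_cast hN.not_ge

theorem monomial_mem_valuationIdeal {x₁ x₂ : R} {u : V} {n : ℕ} (hx₁ : addVal V (f x₁) = n)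
    (hx₂ : f x₂ = u * f x₁) {r j : ℕ} (hj : j ≤ r) :
    x₁ ^ (r - j) * x₂ ^ j ∈ valuationIdeal f (n * r) := by
  rw [mem_valuationIdeal, map_monomial hx₂ hj, addVal_mul, addVal_pow, hx₁]
  push_cast
  rw [mul_comm, nsmul_eq_mul]
  exact le_self_add

variable [IsLocalRing R] [IsLocalHom f]

variable (f) in
theorem pow_maximalIdeal_le_valuationIdeal (N : ℕ) : maximalIdeal R ^ N ≤ valuationIdeal f N :=
  (Ideal.pow_right_mono (fun x hx => map_nonunit f x hx) N).trans (Ideal.le_comap_pow f N)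

variable {x₁ x₂ : R} {u : V} {n : ℕ} [Algebra (ResidueField R) (ResidueField V)]
  (halg : algebraMap (ResidueField R) (ResidueField V) = ResidueField.map f)
  (ht : Transcendental (ResidueField R) (residue V u))
  (hx₁ : addVal V (f x₁) = n) (hx₂ : f x₂ = u * f x₁)
include halg ht hx₁ hx₂

theorem monomial_notMem {r s : ℕ} (hs : s ≤ r) :
    x₁ ^ (r - s) * x₂ ^ s ∉ valuationIdeal f (n * r + 1) ⊔
      Ideal.span (Set.range fun j : Fin s => x₁ ^ (r - j) * x₂ ^ (j : ℕ)) := by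
  intro h
  obtain ⟨z, hz, y, hy, hzy⟩ := Submodule.mem_sup.mp h
  obtain ⟨a, rfl⟩ := (Submodule.mem_span_range_iff_exists_fun R).mp hy
  have hfz : f z = f x₁ ^ r * (u ^ s - ∑ j, f (a j) * u ^ (j : ℕ)) := by
    rw [eq_sub_of_add_eq hzy, map_sub, map_sum, map_monomial hx₂ hs, mul_sub, Finset.mul_sum]
    congr 1
    refine Finset.sum_congr rfl fun j _ => ?_
    rw [smul_eq_mul, map_mul, map_monomial hx₂ (j.2.le.trans hs)]
    ring
  refine pow_sub_sum_notMem_maximalIdeal halg ht a (mem_maximalIdeal_iff_addVal_pos.mpr ?_)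
  have hval := mem_valuationIdeal.mp hz
  rw [hfz, addVal_mul, addVal_pow, hx₁, nsmul_eq_mul] at hval
  push_cast at hval
  rw [mul_comm] at hval
  exact Order.one_le_iff_pos.mp
    ((ENat.add_le_add_iff_left (ENat.natCast_ne_top (r * n))).mp (mod_cast hval))

theorem coheight_valuationIdeal_add_le (r : ℕ) :
    Order.coheight (valuationIdeal f (n * r)) + (r + 1 : ℕ) ≤
      Order.coheight (valuationIdeal f (n * r + 1)) := by
  set J : ℕ → Ideal R := fun s => valuationIdeal f (n * r + 1) ⊔
    Ideal.span (Set.range fun j : Fin s => x₁ ^ (r - j) * x₂ ^ (j : ℕ))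
  have hJ_zero : J 0 = valuationIdeal f (n * r + 1) := by simp [J]
  have hJ_le : J (r + 1) ≤ valuationIdeal f (n * r) := by
    refine sup_le (valuationIdeal_antitone f (Nat.le_succ _)) (Ideal.span_le.mpr ?_)
    rintro _ ⟨j, rfl⟩
    exact monomial_mem_valuationIdeal hx₁ hx₂ (Nat.le_of_lt_succ j.2)
  have hJ_lt : ∀ s < r + 1, J s < J (s + 1) := by
    refine fun s hs => SetLike.lt_iff_le_and_exists.mpr
      ⟨?_, _, ?_, monomial_notMem halg ht hx₁ hx₂ (Nat.le_of_lt_succ hs)⟩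
    · refine sup_le_sup_left (Ideal.span_mono ?_) _
      rintro _ ⟨j, rfl⟩
      exact ⟨j.castSucc, rfl⟩
    · exact Submodule.mem_sup_right (Ideal.subset_span ⟨Fin.last s, rfl⟩)
  calc Order.coheight (valuationIdeal f (n * r)) + (r + 1 : ℕ)
      ≤ Order.coheight (J (r + 1)) + (r + 1 : ℕ) := by gcongr
    _ ≤ Order.coheight (J 0) := Order.coheight_add_le_of_lt_succ J (r + 1) hJ_lt
    _ = Order.coheight (valuationIdeal f (n * r + 1)) := by rw [hJ_zero]

theorem sum_le_coheight_valuationIdeal (hn : 0 < n) (q : ℕ) :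
    ((∑ r ∈ range (q + 1), (r + 1) : ℕ) : ℕ∞) ≤
      Order.coheight (valuationIdeal f (n * q + 1)) := by
  induction q with
  | zero => simpa using (coheight_valuationIdeal_add_le halg ht hx₁ hx₂ 0).trans' le_add_self
  | succ q ih =>
    have hle : n * q + 1 ≤ n * (q + 1) := by rw [mul_add_one]; omega
    rw [sum_range_succ, Nat.cast_add]
    calc _ ≤ Order.coheight (valuationIdeal f (n * q + 1)) + (q + 1 + 1 : ℕ) := by gcongr
      _ ≤ Order.coheight (valuationIdeal f (n * (q + 1))) + (q + 1 + 1 : ℕ) := by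
          gcongr ?_ + _
          exact Order.coheight_anti (valuationIdeal_antitone f hle)
      _ ≤ _ := coheight_valuationIdeal_add_le halg ht hx₁ hx₂ (q + 1)

theorem le_rlen_quotient_valuationIdeal [IsNoetherianRing R] (hn : 0 < n) {i : ℕ} (hi : 0 < i) :
    1 / (2 * (n : ℝ) ^ 2) * (i : ℝ) ^ 2 ≤ rlen R (R ⧸ valuationIdeal f i) := by
  obtain ⟨q, hqi, hiq⟩ : ∃ q, n * q + 1 ≤ i ∧ i ≤ n * (q + 1) := by
    have := Nat.div_add_mod (i - 1) n
    have := Nat.mod_lt (i - 1) hn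
    exact ⟨(i - 1) / n, by omega, by rw [mul_add_one]; omega⟩
  have hlen : ((∑ r ∈ range (q + 1), (r + 1) : ℕ) : ℕ∞) ≤
      Module.length R (R ⧸ valuationIdeal f i) := by
    rw [Module.length_quotient]
    exact (sum_le_coheight_valuationIdeal halg ht hx₁ hx₂ hn q).trans
      (Order.coheight_anti (valuationIdeal_antitone f hqi))
  have hfin := length_quotient_ne_top (valuationIdeal_ne_top f hi)
    (pow_maximalIdeal_le_valuationIdeal f i)
  have hsum : ∑ r ∈ range (q + 1), (r + 1) ≤ (Module.length R (R ⧸ valuationIdeal f i)).toNat := by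
    simpa only [ENat.toNat_natCast] using ENat.toNat_le_toNat hlen hfin
  rw [rlen_eq_toNat_length]
  have hiqR : (i : ℝ) ≤ n * (q + 1) := by exact_mod_cast hiq
  have hsumR : ((q : ℝ) + 1) ^ 2 ≤ 2 * (Module.length R (R ⧸ valuationIdeal f i)).toNat := by
    exact_mod_cast (sq_le_two_mul_sum_range_succ (q + 1)).trans (by omega)
  calc 1 / (2 * (n : ℝ) ^ 2) * (i : ℝ) ^ 2 ≤ 1 / (2 * (n : ℝ) ^ 2) * (n * (q + 1)) ^ 2 := by
        gcongr
    _ = ((q : ℝ) + 1) ^ 2 / 2 := by field_simp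
    _ ≤ _ := by linarith

end ValuationIdeal

theorem stmt_17_general (R : Type*) [CommRing R] [IsNoetherianRing R] [IsLocalRing R]
    (p : Ideal R) [p.IsPrime]
    (V : Subring (FractionRing (R ⧸ p))) [hdvr : IsDiscreteValuationRing V]
    (f : R →+* V)
    (hf : ∀ x : R, (f x : FractionRing (R ⧸ p)) =
      algebraMap (R ⧸ p) (FractionRing (R ⧸ p)) (Ideal.Quotient.mk p x))
    [hloc : IsLocalHom f]
    [alg : Algebra (IsLocalRing.ResidueField R) (IsLocalRing.ResidueField V)]
    (halg : algebraMap (IsLocalRing.ResidueField R) (IsLocalRing.ResidueField V) =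
      IsLocalRing.ResidueField.map f)
    (htrans : ∃ t : IsLocalRing.ResidueField V,
      Transcendental (IsLocalRing.ResidueField R) t) :
    ∃ lam : ℝ, 0 < lam ∧ ∀ i : ℕ, 0 < i →
      lam * (i : ℝ) ^ 2 ≤
        rlen R (R ⧸ Ideal.comap f (IsLocalRing.maximalIdeal V ^ i)) := by
  obtain ⟨t, ht⟩ := htrans
  obtain ⟨u, rfl⟩ := residue_surjective t
  obtain ⟨x₁, x₂, n, hn, hx₁, hx₂⟩ :=
    exists_addVal_eq_pos_and_map_eq_mul Ideal.Quotient.mk_surjective hf u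
  exact ⟨1 / (2 * (n : ℝ) ^ 2), by positivity,
    fun i hi => le_rlen_quotient_valuationIdeal halg ht hx₁ hx₂ hn hi⟩

/-- let `(R,m)` be a 2-dimensional quasi-unmixed Noetherian local
ring and `v` an `m`-valuation of `R`, given by a minimal prime `p` with
`dim R/p = 2` and a discrete valuation ring `V` inside the fraction field of
`R/p`, containing `R/p`, dominating `R` (via the composite local homomorphism
`f : R → V`), and whose residue field is a finitely generated extension of the
residue field of `R` of transcendence degree `1`.  With
`c(v)_i = {a ∈ R : v(a) ≥ i} = f⁻¹(n_V^i)`, there exists `λ > 0` with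
`ℓ(R/c(v)_i) ≥ λ i²` for all `i > 0`. -/
theorem stmt_17 (R : Type*) [CommRing R] [IsNoetherianRing R] [IsLocalRing R]
    (hdim : ringKrullDim R = 2) (hqu : IsQuasiUnmixed R)
    (p : Ideal R) [p.IsPrime] (hp : p ∈ minimalPrimes R)
    (hdimp : ringKrullDim (R ⧸ p) = 2)
    (V : Subring (FractionRing (R ⧸ p))) [hdvr : IsDiscreteValuationRing V]
    (hbir : ∀ y : R ⧸ p, algebraMap (R ⧸ p) (FractionRing (R ⧸ p)) y ∈ V)
    (f : R →+* V)
    (hf : ∀ x : R, (f x : FractionRing (R ⧸ p)) =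
      algebraMap (R ⧸ p) (FractionRing (R ⧸ p)) (Ideal.Quotient.mk p x))
    [hloc : IsLocalHom f]
    (hdom : ∀ x ∈ IsLocalRing.maximalIdeal R, f x ∈ IsLocalRing.maximalIdeal V)
    [alg : Algebra (IsLocalRing.ResidueField R) (IsLocalRing.ResidueField V)]
    (halg : algebraMap (IsLocalRing.ResidueField R) (IsLocalRing.ResidueField V) =
      IsLocalRing.ResidueField.map f)
    (hfg : Algebra.FiniteType (IsLocalRing.ResidueField R) (IsLocalRing.ResidueField V))
    (htrans : ∃ t : IsLocalRing.ResidueField V,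
      Transcendental (IsLocalRing.ResidueField R) t)
    (htrdeg : ¬ ∃ g : Fin 2 → IsLocalRing.ResidueField V,
      AlgebraicIndependent (IsLocalRing.ResidueField R) g) :
    ∃ lam : ℝ, 0 < lam ∧ ∀ i : ℕ, 0 < i →
      lam * (i : ℝ) ^ 2 ≤
        rlen R (R ⧸ Ideal.comap f (IsLocalRing.maximalIdeal V ^ i)) :=
  stmt_17_general R p V (hdvr := hdvr) f hf (hloc := hloc) (alg := alg) halg htrans
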